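/- arXiv:2505.01268 — 4 statements merged into one kernel-verified Lean document; each statement's English description precedes it below -/
import Mathlib

section
/- Every finitely generated FC-group, equipped with the word metric of a finite generating set, has finite asymptotic dimension. -/
open Metric Set Function

namespace APC

variable {X Y : Type*}

/-- A family `𝒰` of subsets of a metric space is `r`-disjoint if any two distinct members
are at distance at least `r`. -/
def RDisjoint [MetricSpace X] (r : ℝ) (𝒰 : Set (Set X)) : Prop :=
  ∀ U ∈ 𝒰, ∀ V ∈ 𝒰, U ≠ V → ∀ x ∈ U, ∀ y ∈ V, r ≤ dist x y

/-- A family `𝒰` is `R`-bounded if every member has diameter at most `R`. -/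
def RBounded [MetricSpace X] (R : ℝ) (𝒰 : Set (Set X)) : Prop :=
  ∀ U ∈ 𝒰, ∀ x ∈ U, ∀ y ∈ U, dist x y ≤ R

/-- A family is uniformly bounded if it is `R`-bounded for some `R > 0`. -/
def UnifBounded [MetricSpace X] (𝒰 : Set (Set X)) : Prop :=
  ∃ R : ℝ, 0 < R ∧ RBounded R 𝒰

/-- `asdim X ≤ n`. -/
def AsdimLE (X : Type*) [MetricSpace X] (n : ℕ) : Prop :=
  ∀ r : ℝ, 0 < r → ∃ 𝒰 : Fin (n + 1) → Set (Set X),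
    (∀ i, UnifBounded (𝒰 i)) ∧ (∀ i, RDisjoint r (𝒰 i)) ∧ (⋃ i, ⋃₀ 𝒰 i) = Set.univ

/-- `X` has finite asymptotic dimension. -/
def HasFiniteAsdim (X : Type*) [MetricSpace X] : Prop := ∃ n : ℕ, AsdimLE X n

/-- Asymptotic property C. -/
def HasAPC (X : Type*) [MetricSpace X] : Prop :=
  ∀ R : ℕ → ℝ, (∀ i, 0 < R i) → StrictMono R →
    ∃ n : ℕ, ∃ 𝒰 : Fin (n + 1) → Set (Set X),
      (∀ i, UnifBounded (𝒰 i)) ∧ (∀ i : Fin (n + 1), RDisjoint (R i) (𝒰 i)) ∧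
      (⋃ i, ⋃₀ 𝒰 i) = Set.univ

/-- `M^a`, the derivative of a collection of finite nonempty subsets of `ℕ`. -/
def deriv (M : Set (Finset ℕ)) (a : ℕ) : Set (Finset ℕ) :=
  {τ | τ.Nonempty ∧ a ∉ τ ∧ insert a τ ∈ M}

/-- `OrdLE α M` means `Ord M ≤ α` in the sense of Radul: either `M = ∅`
(so that `Ord M = 0`), or `Ord M^a < α` for every `a : ℕ`.  Defined by
well-founded recursion on the ordinal `α`. -/
def OrdLE : Ordinal.{0} → Set (Finset ℕ) → Prop :=
  Ordinal.lt_wf.fix (C := fun _ => Set (Finset ℕ) → Prop)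
    (fun α IH M => M = ∅ ∨ ∀ a : ℕ, ∃ β : Ordinal.{0}, ∃ hβ : β < α, IH β hβ (deriv M a))

/-- The collection `A(X,d)` of finite nonempty subsets `σ ⊆ ℕ` such that there is no
covering of `X` by uniformly bounded families `𝒰ᵢ` (`i ∈ σ`), each `i`-disjoint. -/
def AClass (X : Type*) [MetricSpace X] : Set (Finset ℕ) :=
  {σ | σ.Nonempty ∧ ¬ ∃ 𝒰 : ℕ → Set (Set X),
      (∀ i ∈ σ, UnifBounded (𝒰 i)) ∧ (∀ i ∈ σ, RDisjoint (i : ℝ) (𝒰 i)) ∧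
      (⋃ i ∈ σ, ⋃₀ 𝒰 i) = Set.univ}

/-- `trasdim X ≤ α`. -/
def TrasdimLE (X : Type*) [MetricSpace X] (α : Ordinal.{0}) : Prop :=
  OrdLE α (AClass X)

/-- The `(m,n)`-DTUT property: disjointness of the `(m,n)`-tiling through uniform
translation. -/
def DTUT (X : Type*) [MetricSpace X] (m n : ℕ) : Prop :=
  ∃ F : Fin m → ℕ,
    ∀ h : ℕ+ → ℕ+, ∀ k : Fin (m + 1) → ℕ+, StrictMono k →
      ∃ C : (Fin m → ℕ+) → Fin (n + 1) → Set (Set X),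
      ∃ D : (Fin m → ℕ+) → (i : Fin m) → Fin (F i + 1) → Set (Set X),
        ∀ l : Fin m → ℕ+, (∀ r : Fin m, l r ≤ h (k r.succ)) →
          ((∀ j, UnifBounded (C l j)) ∧
           (∀ i s, UnifBounded (D l i s)) ∧
           (∀ j, RDisjoint ((k 0 : ℕ) : ℝ) (C l j)) ∧
           (∀ (i : Fin m) (s : Fin (F i + 1)), RDisjoint ((k i.succ : ℕ) : ℝ) (D l i s)) ∧
           ((⋃ j, ⋃₀ C l j) ∪ (⋃ i, ⋃ s, ⋃₀ D l i s) = Set.univ)) ∧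
          (∀ (i : Fin m) (s : Fin (F i + 1)),
            (∀ t : ℕ+, t ≤ h (k i.succ) →
              (⋃₀ D (Function.update l i t) i s).Nonempty) ∧
            (∀ t t' : ℕ+, t ≤ h (k i.succ) → t' ≤ h (k i.succ) → t ≠ t' →
              Disjoint (⋃₀ D (Function.update l i t) i s)
                (⋃₀ D (Function.update l i t') i s)) ∧
            RDisjoint ((k i.succ : ℕ) : ℝ)
              (⋃ t ∈ {t : ℕ+ | t ≤ h (k i.succ)}, D (Function.update l i t) i s))

/-- The word length of `g` with respect to the symmetrized generating set `S ∪ S⁻¹`. -/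
noncomputable def wordLength {G : Type*} [Group G] (S : Set G) (g : G) : ℕ :=
  sInf {n : ℕ | ∃ L : List G, (∀ x ∈ L, x ∈ S ∨ x⁻¹ ∈ S) ∧ L.prod = g ∧ L.length = n}

/-- A group is FC if every conjugacy class is finite. -/
def IsFCGroup (G : Type*) [Group G] : Prop :=
  ∀ x : G, Set.Finite {y : G | ∃ g : G, g * x * g⁻¹ = y}

/-- A metric on a countable discrete space is proper if every ball is finite. -/
def ProperMet (X : Type*) [MetricSpace X] : Prop :=
  ∀ (x : X) (R : ℝ), (Metric.closedBall x R).Finite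

/-- Left invariance of a metric on a group. -/
def LeftInvariant (G : Type*) [Group G] [MetricSpace G] : Prop :=
  ∀ g x y : G, dist (g * x) (g * y) = dist x y

/-- Bornologous maps. -/
def Bornologous [MetricSpace X] [MetricSpace Y] (f : X → Y) : Prop :=
  ∀ R : ℝ, 0 < R → ∃ P : ℝ, 0 < P ∧ ∀ x y : X, dist x y < R → dist (f x) (f y) < P

/-- Coarse embeddings. -/
def CoarseEmbedding [MetricSpace X] [MetricSpace Y] (f : X → Y) : Prop :=
  ∃ ρminus ρplus : ℝ → ℝ, Monotone ρminus ∧ Monotone ρplus ∧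
    Filter.Tendsto ρminus Filter.atTop Filter.atTop ∧
    (∀ x y : X, ρminus (dist x y) ≤ dist (f x) (f y) ∧ dist (f x) (f y) ≤ ρplus (dist x y))

/-- Coarse equivalences: coarse embeddings with coarsely dense image. -/
def CoarseEquiv [MetricSpace X] [MetricSpace Y] (f : X → Y) : Prop :=
  CoarseEmbedding f ∧ ∃ C : ℝ, 0 < C ∧ ∀ y : Y, ∃ x : X, dist y (f x) ≤ C

/-!
In a finitely generated FC-group the center is the intersection of the centralizers of the
generators, each of finite index because conjugacy classes are finite; so the center has finite
index. Being a finitely generated abelian group, it contains a finite-index copy `ι(ℤⁿ)` of `ℤⁿ`,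
and `Γ` is a finite union of cosets `f ι(ℤⁿ)`. For a proper left-invariant metric (such as a word
metric), `v ↦ f ι(v)` is Lipschitz and uniformly proper for the sup metric on `ℤⁿ`. Cutting `ℤⁿ`
into cubes of large side and coloring them by the parities of their coordinates gives, on each
coset, `2ⁿ` uniformly bounded `r`-disjoint families; together these finitely many families
cover `Γ`.
-/

section CubeColorings

variable [MetricSpace X] {n : ℕ}

lemma unifBounded_empty : UnifBounded (∅ : Set (Set X)) :=
  ⟨1, one_pos, fun _ h => h.elim⟩

lemma rDisjoint_empty (r : ℝ) : RDisjoint r (∅ : Set (Set X)) :=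
  fun _ h => h.elim

lemma hasFiniteAsdim_of_finite_colors {κ : Type*} [Finite κ]
    (h : ∀ r : ℝ, 0 < r → ∃ 𝒰 : κ → Set (Set X),
      (∀ i, UnifBounded (𝒰 i)) ∧ (∀ i, RDisjoint r (𝒰 i)) ∧ (⋃ i, ⋃₀ 𝒰 i) = univ) :
    HasFiniteAsdim X := by
  cases nonempty_fintype κ
  let e : Option κ ≃ Fin (Fintype.card κ + 1) := Fintype.equivFinOfCardEq Fintype.card_option
  refine ⟨Fintype.card κ, fun r hr => ?_⟩
  obtain ⟨𝒰, hbdd, hdisj, hcov⟩ := h r hr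
  let 𝒱 : Option κ → Set (Set X) := fun o => o.elim ∅ 𝒰
  refine ⟨𝒱 ∘ e.symm, fun i => ?_, fun i => ?_, ?_⟩
  · change UnifBounded (𝒱 (e.symm i))
    rcases e.symm i with _ | j
    exacts [unifBounded_empty, hbdd j]
  · change RDisjoint r (𝒱 (e.symm i))
    rcases e.symm i with _ | j
    exacts [rDisjoint_empty r, hdisj j]
  · change ⋃ i, ⋃₀ 𝒱 (e.symm i) = univ
    rw [e.symm.surjective.iUnion_comp (fun o => ⋃₀ 𝒱 o), iUnion_option]
    simp [𝒱, hcov]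

/-- `Int.ediv` rounds down for `b > 0`, so this is the half-open cube `∏ᵢ [b kᵢ, b kᵢ + b)`. -/
def cube (b : ℤ) (k : Fin n → ℤ) : Set (Fin n → ℤ) := {v | ∀ i, v i / b = k i}

lemma mem_cube_ediv (b : ℤ) (v : Fin n → ℤ) : v ∈ cube b (fun i => v i / b) := fun _ => rfl

lemma bounds_of_mem_cube {b : ℤ} (hb : 0 < b) {k v : Fin n → ℤ} (hv : v ∈ cube b k) (i : Fin n) :
    b * k i ≤ v i ∧ v i < b * k i + b :=
  hv i ▸ ⟨Int.mul_ediv_self_le hb.ne', Int.lt_mul_ediv_self_add hb⟩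

lemma dist_lt_of_mem_cube {b : ℤ} (hb : 0 < b) {k v w : Fin n → ℤ}
    (hv : v ∈ cube b k) (hw : w ∈ cube b k) : dist v w < b := by
  refine (dist_pi_lt_iff (by exact_mod_cast hb)).2 fun i => ?_
  obtain ⟨hv₁, hv₂⟩ := bounds_of_mem_cube hb hv i
  obtain ⟨hw₁, hw₂⟩ := bounds_of_mem_cube hb hw i
  rw [Int.dist_eq, abs_sub_lt_iff]
  constructor <;> norm_cast <;> linarith

lemma lt_dist_of_mem_cube {b : ℤ} (hb : 0 < b) {k k' v w : Fin n → ℤ}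
    (hv : v ∈ cube b k) (hw : w ∈ cube b k') (hne : k ≠ k')
    (hparity : ∀ i, (k i : ZMod 2) = k' i) : b < dist v w := by
  obtain ⟨i, hi⟩ := Function.ne_iff.mp hne
  have h2 : (2 : ℤ) ∣ k' i - k i := by
    exact_mod_cast (ZMod.intCast_eq_intCast_iff_dvd_sub _ _ 2).1 (hparity i)
  have hgap : 2 ≤ k i - k' i ∨ 2 ≤ k' i - k i := by omega
  obtain ⟨hv₁, hv₂⟩ := bounds_of_mem_cube hb hv i
  obtain ⟨hw₁, hw₂⟩ := bounds_of_mem_cube hb hw i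
  have hfar : b < |v i - w i| := by
    rw [lt_abs]
    rcases hgap with h | h
    · left; nlinarith
    · right; nlinarith
  calc (b : ℝ) < dist (v i) (w i) := by rw [Int.dist_eq]; exact_mod_cast hfar
    _ ≤ dist v w := dist_le_pi_dist v w i

/-- The witness: the images of the cubes of side `b > ℓ`, colored by the parities of their
coarse coordinates, so that two cubes of the same color are more than `ℓ` apart. -/
lemma exists_coloring_range {φ : (Fin n → ℤ) → X} (hφ : Bornologous φ)
    (hproper : ∀ r : ℝ, ∃ ℓ : ℝ, ∀ v w, dist (φ v) (φ w) < r → dist v w ≤ ℓ) (r : ℝ) :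
    ∃ 𝒰 : (Fin n → ZMod 2) → Set (Set X), (∀ c, UnifBounded (𝒰 c)) ∧
      (∀ c, RDisjoint r (𝒰 c)) ∧ ⋃ c, ⋃₀ 𝒰 c = range φ := by
  obtain ⟨ℓ, hℓ⟩ := hproper r
  set b : ℤ := ⌈ℓ⌉₊ + 1
  have hb : 0 < b := by positivity
  have hℓb : ℓ < b := by
    have := Nat.le_ceil ℓ
    simp only [b]
    push_cast
    linarith
  obtain ⟨P, hP, hφP⟩ := hφ b (by exact_mod_cast hb)
  refine ⟨fun c => (φ '' cube b ·) '' {k | ∀ i, (k i : ZMod 2) = c i}, fun c => ?_, fun c => ?_, ?_⟩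
  · refine ⟨P, hP, ?_⟩
    rintro _ ⟨k, -, rfl⟩ _ ⟨v, hv, rfl⟩ _ ⟨w, hw, rfl⟩
    exact (hφP v w (dist_lt_of_mem_cube hb hv hw)).le
  · rintro _ ⟨k, hk, rfl⟩ _ ⟨k', hk', rfl⟩ hne _ ⟨v, hv, rfl⟩ _ ⟨w, hw, rfl⟩
    by_contra! hclose
    have hfar := lt_dist_of_mem_cube hb hv hw (by rintro rfl; exact hne rfl)
      fun i => (hk i).trans (hk' i).symm
    linarith [hℓ v w hclose]
  · refine Subset.antisymm ?_ ?_
    · simp only [iUnion_subset_iff, sUnion_subset_iff]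
      rintro c _ ⟨k, -, rfl⟩
      exact image_subset_range φ _
    · rintro _ ⟨v, rfl⟩
      exact mem_iUnion.2 ⟨_, _, ⟨_, fun i => rfl, rfl⟩, v, mem_cube_ediv b v, rfl⟩

lemma hasFiniteAsdim_of_iUnion_range {J : Type*} [Finite J] {φ : J → (Fin n → ℤ) → X}
    (hφ : ∀ j, Bornologous (φ j))
    (hproper : ∀ j, ∀ r : ℝ, ∃ ℓ : ℝ, ∀ v w, dist (φ j v) (φ j w) < r → dist v w ≤ ℓ)
    (hcover : ⋃ j, range (φ j) = univ) : HasFiniteAsdim X := by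
  refine hasFiniteAsdim_of_finite_colors (κ := J × (Fin n → ZMod 2)) fun r _ => ?_
  choose 𝒰 hbdd hdisj hcov using fun j => exists_coloring_range (hφ j) (hproper j) r
  refine ⟨fun p => 𝒰 p.1 p.2, fun p => hbdd _ _, fun p => hdisj _ _, ?_⟩
  rw [← hcover, iUnion_prod']
  simp only [hcov]

end CubeColorings

lemma _root_.LipschitzWith.bornologous [MetricSpace X] [MetricSpace Y] {K : NNReal}
    {f : X → Y} (hf : LipschitzWith K f) : Bornologous f := fun R _ =>
  ⟨K * R + 1, by positivity, fun x y hxy => by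
    nlinarith [hf.dist_le_mul x y, K.coe_nonneg, dist_nonneg (x := x) (y := y)]⟩

namespace LeftInvariant

open Multiplicative

variable {Γ : Type*} [Group Γ] [MetricSpace Γ] {n : ℕ}

lemma dist_one_mul_le (hΓ : LeftInvariant Γ) (x y : Γ) :
    dist 1 (x * y) ≤ dist 1 x + dist 1 y :=
  calc dist 1 (x * y) ≤ dist 1 x + dist x (x * y) := dist_triangle _ _ _
    _ = dist 1 x + dist 1 y := by rw [← hΓ x 1 y, mul_one]

lemma dist_one_inv (hΓ : LeftInvariant Γ) (x : Γ) : dist 1 x⁻¹ = dist 1 x := by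
  rw [← hΓ x 1 x⁻¹, mul_one, mul_inv_cancel, dist_comm]

lemma dist_one_pow_le (hΓ : LeftInvariant Γ) (x : Γ) (k : ℕ) :
    dist 1 (x ^ k) ≤ k * dist 1 x := by
  induction k with
  | zero => simp
  | succ k ih =>
    rw [pow_succ, Nat.cast_succ, add_one_mul]
    exact (hΓ.dist_one_mul_le _ _).trans (by linarith)

lemma dist_one_zpow_le (hΓ : LeftInvariant Γ) (x : Γ) (m : ℤ) :
    dist 1 (x ^ m) ≤ ‖m‖ * dist 1 x := by
  obtain ⟨k, rfl | rfl⟩ := Int.eq_nat_or_neg m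
  · simpa using hΓ.dist_one_pow_le x k
  · simpa [hΓ.dist_one_inv] using hΓ.dist_one_pow_le x k

lemma dist_mul_map_ofAdd (hΓ : LeftInvariant Γ) (ι : Multiplicative (Fin n → ℤ) →* Γ) (f : Γ)
    (v w : Fin n → ℤ) :
    dist (f * ι (ofAdd v)) (f * ι (ofAdd w)) = dist 1 (ι (ofAdd (w - v))) := by
  have : (f * ι (ofAdd v))⁻¹ * (f * ι (ofAdd w)) = ι (ofAdd (w - v)) := by
    rw [sub_eq_neg_add, ofAdd_add, ofAdd_neg, map_mul, map_inv]
    group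
  rw [← hΓ (f * ι (ofAdd v))⁻¹, inv_mul_cancel, this]

/-- `u ↦ dist 1 (ι u)` is subadditive, so it is at most `∑ᵢ dist 1 (ι eᵢ)` times the sup norm. -/
lemma exists_lipschitzWith_mul_map_ofAdd (hΓ : LeftInvariant Γ)
    (ι : Multiplicative (Fin n → ℤ) →* Γ) :
    ∃ K, ∀ f : Γ, LipschitzWith K fun v => f * ι (ofAdd v) := by
  let L : (Fin n → ℤ) → ℝ := fun u => dist 1 (ι (ofAdd u))
  have hadd : ∀ u u', L (u + u') ≤ L u + L u' := fun u u' => by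
    simpa only [L, ofAdd_add, map_mul] using hΓ.dist_one_mul_le _ _
  have hsmul : ∀ (m : ℤ) u, L (m • u) ≤ ‖m‖ * L u := fun m u => by
    simpa only [L, ofAdd_zsmul, map_zpow] using hΓ.dist_one_zpow_le _ m
  refine ⟨∑ i, nndist 1 (ι (ofAdd (Pi.single i 1))), fun f => .of_dist_le_mul fun v w => ?_⟩
  rw [hΓ.dist_mul_map_ofAdd, dist_eq_norm', NNReal.coe_sum, Finset.sum_mul]
  calc L (w - v) = L (∑ i, (w - v) i • Pi.single i 1) := by rw [← pi_eq_sum_univ']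
    _ ≤ ∑ i, L ((w - v) i • Pi.single i 1) :=
        Finset.le_sum_of_subadditive L (by simp [L]) hadd _ _
    _ ≤ ∑ i, ‖w - v‖ * L (Pi.single i 1) := Finset.sum_le_sum fun i _ =>
        (hsmul _ _).trans (mul_le_mul_of_nonneg_right (norm_le_pi_norm (w - v) i) dist_nonneg)
    _ = ∑ i, (nndist 1 (ι (ofAdd (Pi.single i 1))) : ℝ) * ‖w - v‖ := by
        simp only [coe_nndist, L, mul_comm]

lemma exists_dist_le_of_dist_mul_map_ofAdd_lt (hΓ : LeftInvariant Γ) (hP : ProperMet Γ)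
    {ι : Multiplicative (Fin n → ℤ) →* Γ} (hι : Injective ι) (r : ℝ) :
    ∃ ℓ : ℝ, ∀ f v w, dist (f * ι (ofAdd v)) (f * ι (ofAdd w)) < r → dist v w ≤ ℓ := by
  have hfin : {u : Fin n → ℤ | ι (ofAdd u) ∈ closedBall 1 r}.Finite :=
    (hP 1 r).preimage (hι.comp ofAdd.injective).injOn
  obtain ⟨ℓ, hℓ⟩ := isBounded_iff_forall_norm_le.1 hfin.isBounded
  refine ⟨ℓ, fun f v w hvw => ?_⟩
  rw [hΓ.dist_mul_map_ofAdd, dist_comm] at hvw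
  rw [dist_eq_norm']
  exact hℓ _ (mem_closedBall.2 hvw.le)

end LeftInvariant

section VirtuallyFreeAbelian

open Multiplicative Subgroup

lemma _root_.CommGroup.exists_injective_finiteIndex_range (A : Type*) [CommGroup A]
    [Group.FG A] :
    ∃ n, ∃ ι : Multiplicative (Fin n → ℤ) →* A, Injective ι ∧ ι.range.FiniteIndex := by
  obtain ⟨n, κ, _, p, hp, e, ⟨φ⟩⟩ := AddCommGroup.equiv_free_prod_directSum_zmod (Additive A)
  have : ∀ i, NeZero (p i ^ e i) := fun i => ⟨pow_ne_zero _ (hp i).ne_zero⟩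
  have : Finite (DirectSum κ fun i => ZMod (p i ^ e i)) :=
    .of_equiv _ DFinsupp.equivFunOnFintype.symm
  let free : (Fin n → ℤ) →+ Additive A := φ.symm.toAddMonoidHom.comp <|
    (AddMonoidHom.inl _ _).comp (Finsupp.linearEquivFunOnFinite ℤ ℤ (Fin n)).symm.toAddMonoidHom
  let torsion : A →* Multiplicative (DirectSum κ fun i => ZMod (p i ^ e i)) :=
    AddMonoidHom.toMultiplicativeRight ((AddMonoidHom.snd _ _).comp φ.toAddMonoidHom)
  -- the range of the free part contains the kernel of the projection onto the finite torsion part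
  refine ⟨n, AddMonoidHom.toMultiplicativeLeft free, ?_, finiteIndex_of_le (H := torsion.ker) ?_⟩
  · exact φ.symm.injective.comp <| (Prod.mk_left_injective 0).comp
      (Finsupp.linearEquivFunOnFinite ℤ ℤ (Fin n)).symm.injective
  · intro x hx
    have hx : (φ (Additive.ofMul x)).2 = 0 := by simpa [torsion] using hx
    refine ⟨ofAdd (φ (Additive.ofMul x)).1, ?_⟩
    change Additive.toMul (φ.symm ((Finsupp.linearEquivFunOnFinite ℤ ℤ (Fin n)).symm
      (φ (Additive.ofMul x)).1, 0)) = x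
    rw [Finsupp.linearEquivFunOnFinite_symm_coe, ← hx, Prod.mk.eta, φ.symm_apply_apply]
    rfl

lemma _root_.Subgroup.exists_injective_finiteIndex_range {G : Type*} [Group G] [Group.FG G]
    (H : Subgroup G) [H.FiniteIndex] [IsMulCommutative H] :
    ∃ n, ∃ ι : Multiplicative (Fin n → ℤ) →* G, Injective ι ∧ ι.range.FiniteIndex := by
  have : Group.FG H := fg_of_index_ne_zero H
  let : CommGroup H := open scoped IsMulCommutative in inferInstance
  obtain ⟨n, ι, hinj, hfin⟩ := CommGroup.exists_injective_finiteIndex_range H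
  refine ⟨n, H.subtype.comp ι, Subtype.val_injective.comp hinj, ⟨?_⟩⟩
  rw [MonoidHom.range_comp, index_map_subtype]
  exact mul_ne_zero hfin.index_ne_zero FiniteIndex.index_ne_zero

lemma hasFiniteAsdim_of_injective_finiteIndex_range {Γ : Type*} [Group Γ] [MetricSpace Γ]
    {n : ℕ} (hΓ : LeftInvariant Γ) (hP : ProperMet Γ) {ι : Multiplicative (Fin n → ℤ) →* Γ}
    (hι : Injective ι) [ι.range.FiniteIndex] : HasFiniteAsdim Γ := by
  obtain ⟨K, hK⟩ := hΓ.exists_lipschitzWith_mul_map_ofAdd ι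
  refine hasFiniteAsdim_of_iUnion_range (J := Γ ⧸ ι.range) (φ := fun q v => q.out * ι (ofAdd v))
    (fun q => (hK _).bornologous)
    (fun q r => (hΓ.exists_dist_le_of_dist_mul_map_ofAdd_lt hP hι r).imp fun ℓ h => h _)
    (eq_univ_of_forall fun g => mem_iUnion.2 ⟨g, ?_⟩)
  obtain ⟨⟨_, u, rfl⟩, hu⟩ := QuotientGroup.mk_out_eq_mul ι.range g
  exact ⟨toAdd u⁻¹, by simp [hu]⟩

end VirtuallyFreeAbelian

section FCGroup

open MulAction

variable {G : Type*} [Group G]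

lemma IsFCGroup.finiteIndex_centralizer (hFC : IsFCGroup G) (g : G) :
    (Subgroup.centralizer {g}).FiniteIndex := by
  have : Finite (orbit (ConjAct G) g) :=
    (hFC g).subset fun _ ⟨c, hc⟩ => ⟨ConjAct.ofConjAct c, hc⟩
  have : Finite (G ⧸ Subgroup.centralizer {g}) :=
    .of_equiv _ ((orbitEquivQuotientStabilizer (ConjAct G) g).trans
      (Subgroup.quotientEquivOfEq (ConjAct.stabilizer_eq_centralizer g)))
  exact Subgroup.finiteIndex_of_finite_quotient

lemma IsFCGroup.finiteIndex_center [Group.FG G] (hFC : IsFCGroup G) :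
    (Subgroup.center G).FiniteIndex := by
  obtain ⟨S, hS⟩ := Group.FG.out (G := G)
  rw [Subgroup.center_eq_iInf hS]
  exact Subgroup.finiteIndex_iInf' _ fun g _ => hFC.finiteIndex_centralizer g

end FCGroup

section WordMetric

open Pointwise

variable {Γ : Type*} [Group Γ] [MetricSpace Γ] {S : Finset Γ}

lemma leftInvariant_of_word_metric
    (hword : ∀ x y : Γ, dist x y = (wordLength (S : Set Γ) (x⁻¹ * y) : ℝ)) : LeftInvariant Γ :=
  fun g x y => by rw [hword, hword, mul_inv_rev, mul_assoc, inv_mul_cancel_left]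

lemma exists_word_of_word_metric
    (hword : ∀ x y : Γ, dist x y = (wordLength (S : Set Γ) (x⁻¹ * y) : ℝ)) (g : Γ) :
    ∃ L : List Γ, (∀ x ∈ L, x ∈ S ∨ x⁻¹ ∈ S) ∧ L.prod = g ∧
      L.length = wordLength (S : Set Γ) g := by
  rcases Nat.eq_zero_or_pos (wordLength (S : Set Γ) g) with h | h
  -- `sInf ∅ = 0`, so a zero word length provides no word; here the metric forces `g = 1`
  · have : 1 = g := by simpa [h] using hword 1 g
    exact ⟨[], by simp, by simp [← this], h.symm⟩
  · exact Nat.sInf_mem (Nat.nonempty_of_pos_sInf h)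

lemma closure_eq_top_of_word_metric
    (hword : ∀ x y : Γ, dist x y = (wordLength (S : Set Γ) (x⁻¹ * y) : ℝ)) :
    Subgroup.closure (S : Set Γ) = ⊤ := by
  refine eq_top_iff.2 fun g _ => ?_
  obtain ⟨L, hL, rfl, -⟩ := exists_word_of_word_metric hword g
  refine Subgroup.list_prod_mem _ fun x hx => ?_
  rcases hL x hx with h | h
  · exact Subgroup.subset_closure h
  · exact (Subgroup.inv_mem_iff _).1 (Subgroup.subset_closure h)

lemma properMet_of_word_metric
    (hword : ∀ x y : Γ, dist x y = (wordLength (S : Set Γ) (x⁻¹ * y) : ℝ)) : ProperMet Γ := by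
  intro x R
  let T : Set Γ := S ∪ (S : Set Γ)⁻¹
  have : Finite T := (S.finite_toSet.union S.finite_toSet.inv).to_subtype
  refine ((List.finite_length_le T ⌊R⌋₊).image fun L => x * (L.map Subtype.val).prod).subset ?_
  intro y hy
  obtain ⟨L, hL, hprod, hlen⟩ := exists_word_of_word_metric hword (x⁻¹ * y)
  refine ⟨L.attach.map fun a => ⟨a.1, hL a.1 a.2⟩, ?_, ?_⟩
  · show List.length _ ≤ _
    rw [List.length_map, List.length_attach, hlen]
    exact Nat.le_floor ((hword x y).symm.trans_le (mem_closedBall'.1 hy))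
  · simp [hprod]

end WordMetric

end APC

open APC Set

theorem fg_fc_group_finite_asdim_general {Γ : Type*} [Group Γ] [MetricSpace Γ]
    (S : Finset Γ)
    (hword : ∀ x y : Γ, dist x y = (wordLength (S : Set Γ) (x⁻¹ * y) : ℝ))
    (hFC : IsFCGroup Γ) :
    HasFiniteAsdim Γ := by
  have : Group.FG Γ := Group.fg_iff.2 ⟨S, closure_eq_top_of_word_metric hword, S.finite_toSet⟩
  have := hFC.finiteIndex_center
  obtain ⟨n, ι, hι, hfin⟩ := (Subgroup.center Γ).exists_injective_finiteIndex_range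
  exact hasFiniteAsdim_of_injective_finiteIndex_range (leftInvariant_of_word_metric hword)
    (properMet_of_word_metric hword) hι

/-- Every finitely generated FC-group, with the word metric of a finite
generating set, has finite asymptotic dimension. -/
theorem fg_fc_group_finite_asdim {Γ : Type*} [Group Γ] [MetricSpace Γ]
    (S : Finset Γ) (hgen : Subgroup.closure (S : Set Γ) = ⊤)
    (hword : ∀ x y : Γ, dist x y = (wordLength (S : Set Γ) (x⁻¹ * y) : ℝ))
    (hFC : IsFCGroup Γ) :
    HasFiniteAsdim Γ :=
  fg_fc_group_finite_asdim_general S hword hFC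
end

section
/- Let Γ be a finitely generated group in which every conjugacy class is finite (an FC-group). Then the center Z(Γ) has finite index in Γ. -/
open Metric Set Function

open APC Set

/-! By orbit–stabilizer, the centralizer of `g` has index the size of the conjugacy class of `g`,
which is finite in an FC-group. The center is the intersection of the centralizers of a finite
generating set, hence has finite index. -/

namespace APC.IsFCGroup

variable {G : Type*} [Group G]

theorem finite_orbit_conjAct (hFC : IsFCGroup G) (g : G) :
    (MulAction.orbit (ConjAct G) g).Finite :=
  (hFC g).subset fun _ ⟨h, hh⟩ => ⟨ConjAct.ofConjAct h, hh⟩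

theorem finiteIndex_centralizer_singleton (hFC : IsFCGroup G) (g : G) :
    (Subgroup.centralizer {g}).FiniteIndex := by
  have hstab : (MulAction.stabilizer (ConjAct G) g).index ≠ 0 := by
    rw [MulAction.index_stabilizer]
    exact ((ncard_pos (hFC.finite_orbit_conjAct g)).mpr ⟨g, MulAction.mem_orbit_self g⟩).ne'
  rw [Subgroup.centralizer_eq_comap_stabilizer]
  exact ⟨(Subgroup.index_comap_of_surjective _ ConjAct.toConjAct.surjective).trans_ne hstab⟩

end APC.IsFCGroup

/-- In a finitely generated FC-group, the center has finite index. -/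
theorem center_finiteIndex_of_fg_fc {Γ : Type*} [Group Γ] [Group.FG Γ]
    (hFC : IsFCGroup Γ) :
    (Subgroup.center Γ).FiniteIndex := by
  obtain ⟨S, hS⟩ := Group.FG.out (G := Γ)
  rw [Subgroup.center_eq_iInf hS]
  exact Subgroup.finiteIndex_iInf' _ fun g _ => hFC.finiteIndex_centralizer_singleton g
end

section
/- Let X and Y be coarsely equivalent metric spaces and let m, n ∈ ℕ. If X has the (m,n)-DTUT property, then Y has the (m,n)-DTUT property. -/
open Metric Set Function

namespace APC

variable {X Y : Type*}

/-! Take a coarse inverse `g : Y → X` of `f`, so that every point of `X` lies within some `δ`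
of the image of `g`, and pull each family of `X` back to `Y` as the preimages under `g` of the
open `δ`-thickenings of its members. The thickening makes every pulled-back translate nonempty,
and disjoint translates stay disjoint as long as they are `2δ` apart. Since `g` is bornologous,
sets far enough apart in `X` have `k`-apart preimages in `Y`; so one applies the DTUT property
of `X` to a sequence `k'` of large enough distances, with `h` transported from `k` to `k'`. -/

variable [MetricSpace X]

def EffectivelyProper [MetricSpace Y] (g : Y → X) : Prop :=
  ∀ R : ℝ, ∃ R' : ℝ, ∀ y y' : Y, dist (g y) (g y') ≤ R → dist y y' ≤ R'

theorem RDisjoint.mono {r : ℝ} {𝒰 𝒱 : Set (Set X)} (h : RDisjoint r 𝒰) (h𝒱 : 𝒱 ⊆ 𝒰) :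
    RDisjoint r 𝒱 :=
  fun U hU V hV hUV => h U (h𝒱 hU) V (h𝒱 hV) hUV

theorem RDisjoint.mono_radius {r r' : ℝ} {𝒰 : Set (Set X)} (h : RDisjoint r' 𝒰) (hr : r ≤ r') :
    RDisjoint r 𝒰 :=
  fun U hU V hV hUV x hx y hy => hr.trans (h U hU V hV hUV x hx y hy)

theorem Bornologous.exists_le_dist [MetricSpace Y] {g : Y → X} (hg : Bornologous g) {r : ℝ}
    (hr : 0 < r) :
    ∃ P > 0, ∀ y y' : Y, P ≤ dist (g y) (g y') → r ≤ dist y y' := by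
  obtain ⟨P, hP0, hP⟩ := hg r hr
  exact ⟨P, hP0, fun y y' hPy => le_of_not_gt fun hy => (hP y y' hy).not_ge hPy⟩

theorem CoarseEmbedding.exists_dist_le_of_dist_le [MetricSpace Y] {f : X → Y}
    (hf : CoarseEmbedding f) (R : ℝ) :
    ∃ R' : ℝ, ∀ x x' : X, dist x x' ≤ R → dist (f x) (f x') ≤ R' := by
  obtain ⟨_, ρp, _, hρpM, _, hρ⟩ := hf
  exact ⟨ρp R, fun x x' hR => (hρ x x').2.trans (hρpM hR)⟩

theorem CoarseEmbedding.exists_dist_lt_of_dist_lt [MetricSpace Y] {f : X → Y}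
    (hf : CoarseEmbedding f) (B : ℝ) :
    ∃ L : ℝ, ∀ x x' : X, dist (f x) (f x') < B → dist x x' < L := by
  obtain ⟨ρm, _, _, _, hρm, hρ⟩ := hf
  obtain ⟨L, hL⟩ := Filter.eventually_atTop.1 (hρm.eventually_ge_atTop B)
  exact ⟨L, fun x x' hB => lt_of_not_ge fun hx =>
    (hB.trans_le' ((hL _ hx).trans (hρ x x').1)).false⟩

theorem CoarseEquiv.exists_coarseInverse [MetricSpace Y] {f : X → Y} (hf : CoarseEquiv f) :
    ∃ g : Y → X, EffectivelyProper g ∧ Bornologous g ∧ ∃ δ > 0, ∀ x, ∃ y, dist x (g y) < δ := by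
  obtain ⟨hemb, C, -, hdense⟩ := hf
  choose g hg using hdense
  have hfg : ∀ y y', dist y y' ≤ dist (f (g y)) (f (g y')) + 2 * C := fun y y' => by
    linarith [dist_triangle4 y (f (g y)) (f (g y')) y', hg y, hg y', dist_comm y' (f (g y'))]
  have hgf : ∀ y y', dist (f (g y)) (f (g y')) ≤ dist y y' + 2 * C := fun y y' => by
    linarith [dist_triangle4 (f (g y)) y y' (f (g y')), hg y, hg y', dist_comm y (f (g y))]
  refine ⟨g, fun R => ?_, fun R _ => ?_, ?_⟩
  · obtain ⟨R', hR'⟩ := hemb.exists_dist_le_of_dist_le R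
    exact ⟨R' + 2 * C, fun y y' hR => by linarith [hfg y y', hR' _ _ hR]⟩
  · obtain ⟨L, hL⟩ := hemb.exists_dist_lt_of_dist_lt (R + 2 * C)
    exact ⟨max L 1, by positivity, fun y y' hR =>
      (hL _ _ (by linarith [hgf y y'])).trans_le (le_max_left _ _)⟩
  · obtain ⟨L, hL⟩ := hemb.exists_dist_lt_of_dist_lt (C + 1)
    exact ⟨max L 1, by positivity, fun x => ⟨f x, (hL _ _ (by
      linarith [hg (f x), dist_comm (f x) (f (g (f x)))])).trans_le (le_max_left _ _)⟩⟩

def coarsePullback (g : Y → X) (δ : ℝ) (𝒰 : Set (Set X)) : Set (Set Y) :=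
  (fun U => g ⁻¹' thickening δ U) '' 𝒰

section coarsePullback

variable {g : Y → X} {δ : ℝ}

theorem coarsePullback_biUnion {ι : Type*} (T : Set ι) (𝒰 : ι → Set (Set X)) :
    coarsePullback g δ (⋃ t ∈ T, 𝒰 t) = ⋃ t ∈ T, coarsePullback g δ (𝒰 t) :=
  image_iUnion₂ _ _

theorem UnifBounded.coarsePullback [MetricSpace Y] (hg : EffectivelyProper g) {𝒰 : Set (Set X)}
    (h𝒰 : UnifBounded 𝒰) : UnifBounded (coarsePullback g δ 𝒰) := by
  obtain ⟨R, -, hR⟩ := h𝒰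
  obtain ⟨R', hR'⟩ := hg (R + 2 * δ)
  refine ⟨max R' 1, by positivity, ?_⟩
  rintro _ ⟨U, hU, rfl⟩ y hy y' hy'
  obtain ⟨u, hu, hyu⟩ := mem_thickening_iff.1 hy
  obtain ⟨u', hu', hyu'⟩ := mem_thickening_iff.1 hy'
  refine (hR' y y' ?_).trans (le_max_left _ _)
  linarith [dist_triangle4 (g y) u u' (g y'), hR U hU u hu u' hu', dist_comm u' (g y')]

theorem RDisjoint.coarsePullback [MetricSpace Y] {r L : ℝ}
    (hg : ∀ y y', L ≤ dist (g y) (g y') → r ≤ dist y y')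
    {𝒰 : Set (Set X)} (h𝒰 : RDisjoint (L + 2 * δ) 𝒰) : RDisjoint r (coarsePullback g δ 𝒰) := by
  rintro _ ⟨U, hU, rfl⟩ _ ⟨V, hV, rfl⟩ hUV y hy y' hy'
  obtain ⟨u, hu, hyu⟩ := mem_thickening_iff.1 hy
  obtain ⟨v, hv, hyv⟩ := mem_thickening_iff.1 hy'
  have huv := h𝒰 U hU V hV (fun h => hUV (h ▸ rfl)) u hu v hv
  exact hg y y' (by linarith [dist_triangle4 u (g y) (g y') v, dist_comm u (g y)])

theorem preimage_sUnion_subset_coarsePullback (hδ : 0 < δ) (𝒰 : Set (Set X)) :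
    g ⁻¹' ⋃₀ 𝒰 ⊆ ⋃₀ coarsePullback g δ 𝒰 := by
  rintro y ⟨U, hU, hy⟩
  exact ⟨_, ⟨U, hU, rfl⟩, self_subset_thickening hδ U hy⟩

theorem nonempty_sUnion_coarsePullback (hg : ∀ x, ∃ y, dist x (g y) < δ)
    {𝒰 : Set (Set X)} (h𝒰 : (⋃₀ 𝒰).Nonempty) : (⋃₀ coarsePullback g δ 𝒰).Nonempty := by
  obtain ⟨x, U, hU, hx⟩ := h𝒰
  obtain ⟨y, hy⟩ := hg x
  exact ⟨y, _, ⟨U, hU, rfl⟩, mem_thickening_iff.2 ⟨x, hx, by rwa [dist_comm]⟩⟩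

theorem disjoint_sUnion_coarsePullback {𝒜 ℬ : Set (Set X)} (hAB : Disjoint (⋃₀ 𝒜) (⋃₀ ℬ))
    (h : RDisjoint (2 * δ) (𝒜 ∪ ℬ)) :
    Disjoint (⋃₀ coarsePullback g δ 𝒜) (⋃₀ coarsePullback g δ ℬ) := by
  rw [Set.disjoint_left]
  rintro y ⟨_, ⟨U, hU, rfl⟩, hyU⟩ ⟨_, ⟨V, hV, rfl⟩, hyV⟩
  obtain ⟨u, hu, hyu⟩ := mem_thickening_iff.1 hyU
  obtain ⟨v, hv, hyv⟩ := mem_thickening_iff.1 hyV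
  have hUV : U ≠ V := by
    rintro rfl
    exact Set.disjoint_left.1 hAB ⟨U, hU, hu⟩ ⟨U, hV, hu⟩
  have huv := h U (Or.inl hU) V (Or.inr hV) hUV u hu v hv
  linarith [dist_triangle u (g y) v, dist_comm u (g y)]

end coarsePullback

theorem exists_strictMono_pnat_ge (m : ℕ) (B : ℝ) :
    ∃ k : Fin (m + 1) → ℕ+, StrictMono k ∧ ∀ r, B ≤ ((k r : ℕ) : ℝ) := by
  refine ⟨fun r => (⌈B⌉₊ + r).succPNat, fun a b hab => ?_, fun r => ?_⟩
  · simpa [← PNat.coe_lt_coe] using hab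
  · simp only [Nat.succPNat_coe, Nat.cast_succ, Nat.cast_add]
    linarith [Nat.le_ceil B, (r : ℕ).cast_nonneg (α := ℝ)]

theorem DTUT.comap [MetricSpace Y] {m n : ℕ} (hX : DTUT X m n) {g : Y → X}
    (hproper : EffectivelyProper g) (hborn : Bornologous g) {δ : ℝ} (hδ : 0 < δ)
    (hdense : ∀ x, ∃ y, dist x (g y) < δ) : DTUT Y m n := by
  obtain ⟨F, hF⟩ := hX
  refine ⟨F, fun h k hk => ?_⟩
  obtain ⟨P, hP0, hP⟩ := hborn.exists_le_dist (r := (k (Fin.last m) : ℕ)) (by positivity)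
  obtain ⟨k', hk', hk'_ge⟩ := exists_strictMono_pnat_ge m (P + 2 * δ)
  have hpull : ∀ r 𝒰, RDisjoint ((k' r : ℕ) : ℝ) 𝒰 →
      RDisjoint ((k r : ℕ) : ℝ) (coarsePullback g δ 𝒰) := fun r 𝒰 h𝒰 => by
    have hk_le : ((k r : ℕ) : ℝ) ≤ (k (Fin.last m) : ℕ) := by
      exact_mod_cast hk.monotone (Fin.le_last r)
    exact .coarsePullback (fun y y' hy => hk_le.trans (hP y y' hy)) (h𝒰.mono_radius (hk'_ge r))
  obtain ⟨CX, DX, hCD⟩ := hF (extend k' (h ∘ k) 1) k' hk'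
  have hh : ∀ r, extend k' (h ∘ k) 1 (k' r) = h (k r) := hk'.injective.extend_apply _ _
  refine ⟨fun l j => coarsePullback g δ (CX l j), fun l i s => coarsePullback g δ (DX l i s),
    fun l hl => ?_⟩
  obtain ⟨⟨hCb, hDb, hCd, hDd, hcov⟩, htr⟩ := hCD l fun r => (hh r.succ).symm ▸ hl r
  refine ⟨⟨fun j => (hCb j).coarsePullback hproper, fun i s => (hDb i s).coarsePullback hproper,
    fun j => hpull 0 _ (hCd j), fun i s => hpull i.succ _ (hDd i s), ?_⟩, fun i s => ?_⟩
  · refine eq_univ_of_univ_subset ?_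
    calc univ = g ⁻¹' ((⋃ j, ⋃₀ CX l j) ∪ ⋃ i, ⋃ s, ⋃₀ DX l i s) := by rw [hcov, preimage_univ]
      _ ⊆ _ := by
        simp only [preimage_union, preimage_iUnion]
        gcongr
        all_goals exact preimage_sUnion_subset_coarsePullback hδ _
  · obtain ⟨hne, hdisj, hsep⟩ := htr i s
    rw [hh] at hne hdisj hsep
    refine ⟨fun t ht => nonempty_sUnion_coarsePullback hdense (hne t ht),
      fun t t' ht ht' htt' => disjoint_sUnion_coarsePullback (hdisj t t' ht ht' htt')
        ((hsep.mono ?_).mono_radius ?_), ?_⟩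
    · exact union_subset (subset_biUnion_of_mem (u := fun t => DX (update l i t) i s) ht)
        (subset_biUnion_of_mem (u := fun t => DX (update l i t) i s) ht')
    · linarith [hk'_ge i.succ]
    · rw [← coarsePullback_biUnion]
      exact hpull i.succ _ hsep

end APC

open APC Set

/-- The `(m,n)`-DTUT property is a coarse invariant:
if `X` and `Y` are coarsely equivalent and `X` has the `(m,n)`-DTUT property,
then so does `Y`. -/
theorem dtut_coarse_invariant {X Y : Type*} [MetricSpace X] [MetricSpace Y]
    (m n : ℕ) (f : X → Y) (hf : CoarseEquiv f) (hX : DTUT X m n) :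
    DTUT Y m n := by
  obtain ⟨g, hproper, hborn, δ, hδ, hdense⟩ := hf.exists_coarseInverse
  exact hX.comap hproper hborn hδ hdense
end

section
/- The free group F_2 on two generators, equipped with the word metric associated with a free basis, has asymptotic dimension exactly 1. -/
open Metric Set Function

open APC Set

/-!
A free group is a tree: right multiplication by `y` changes only the last `‖y‖` letters of a
reduced word. At scale `n`, cut the free group into the annuli `k n ≤ ‖x‖ < (k + 1) n` and cut
each annulus further according to the prefix of length `(k - 1) n`. Every piece lies within
`2 n` of its common prefix, and two distinct pieces whose annuli have the same parity are at
distance at least `n`, so the two parity classes witness `asdim ≤ 1`. On the other hand the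
powers of a generator form an unbounded chain with unit steps, which no cover by one
`2`-disjoint bounded family can accommodate.
-/

section Partition

variable {X : Type*} [MetricSpace X]

theorem asdimLE_of_partition {n : ℕ}
    (h : ∀ r > 0, ∃ (ι : Type*) (piece : X → ι) (color : ι → Fin (n + 1)) (R : ℝ),
      (∀ x y, piece x = piece y → dist x y ≤ R) ∧
      (∀ x y, piece x ≠ piece y → color (piece x) = color (piece y) → r ≤ dist x y)) :
    AsdimLE X n := by
  intro r hr
  obtain ⟨ι, piece, color, R, hbdd, hsep⟩ := h r hr
  refine ⟨fun i => (fun j => piece ⁻¹' {j}) '' (color ⁻¹' {i}), fun i => ?_, fun i => ?_, ?_⟩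
  · refine ⟨max R 1, by positivity, ?_⟩
    rintro _ ⟨j, -, rfl⟩ x hx y hy
    exact (hbdd x y (hx.trans hy.symm)).trans (le_max_left _ _)
  · rintro _ ⟨j, hj, rfl⟩ _ ⟨j', hj', rfl⟩ hne x (rfl : piece x = j) y (rfl : piece y = j')
    exact hsep x y (fun h => hne (by rw [h])) (hj.trans hj'.symm)
  · refine eq_univ_of_forall fun x => ?_
    simp only [mem_iUnion, mem_sUnion]
    exact ⟨color (piece x), _, ⟨piece x, rfl, rfl⟩, rfl⟩

theorem not_asdimLE_zero_of_chain (f : ℕ → X) (c : ℝ) (hstep : ∀ m, dist (f m) (f (m + 1)) ≤ c)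
    (hf : ¬ Bornology.IsBounded (range f)) : ¬ AsdimLE X 0 := by
  intro h0
  obtain ⟨𝒰, hbdd, hdisj, hcover⟩ := h0 (c + 1) (by linarith [dist_nonneg.trans (hstep 0)])
  have mem_cover (x : X) : ∃ U ∈ 𝒰 0, x ∈ U := by
    have hx : x ∈ ⋃ i, ⋃₀ 𝒰 i := hcover ▸ mem_univ x
    obtain ⟨i, U, hU, hxU⟩ := by simpa only [mem_iUnion, mem_sUnion] using hx
    exact ⟨U, Fin.fin_one_eq_zero i ▸ hU, hxU⟩
  obtain ⟨U, hU, hf0⟩ := mem_cover (f 0)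
  have hrange : range f ⊆ U := by
    rintro _ ⟨m, rfl⟩
    induction m with
    | zero => exact hf0
    | succ m ih =>
      obtain ⟨V, hV, hfV⟩ := mem_cover (f (m + 1))
      obtain rfl : V = U := by
        by_contra hVU
        linarith [hdisj 0 U hU V hV (Ne.symm hVU) _ ih _ hfV, hstep m]
      exact hfV
  obtain ⟨R, -, hR⟩ := hbdd 0
  exact hf (isBounded_iff.2 ⟨R, fun x hx y hy => hR U hU x (hrange hx) y (hrange hy)⟩)

end Partition

namespace FreeGroup

variable {α : Type*} [DecidableEq α]

theorem norm_list_prod_le {L : List (FreeGroup α)}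
    (hL : ∀ g ∈ L, g ∈ range of ∨ g⁻¹ ∈ range of) : norm L.prod ≤ L.length := by
  induction L with
  | nil => simp
  | cons g L ih =>
    have hg : norm g ≤ 1 := by
      rcases hL g List.mem_cons_self with ⟨i, rfl⟩ | ⟨i, hi⟩
      · exact (norm_of i).le
      · rw [← norm_inv_eq, ← hi, norm_of]
    rw [List.prod_cons, List.length_cons, add_comm]
    exact (norm_mul_le g L.prod).trans
      (add_le_add hg (ih fun h hh => hL h (List.mem_cons_of_mem _ hh)))

theorem wordLength_range_of (x : FreeGroup α) : wordLength (range of) x = norm x := by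
  have hletters : norm x ∈ {n : ℕ | ∃ L : List (FreeGroup α),
      (∀ g ∈ L, g ∈ range of ∨ g⁻¹ ∈ range of) ∧ L.prod = x ∧ L.length = n} := by
    refine ⟨x.toWord.map fun p => cond p.2 (of p.1) (of p.1)⁻¹, ?_, ?_, by simp [norm]⟩
    · simp only [List.mem_map]
      rintro _ ⟨⟨i, _ | _⟩, -, rfl⟩
      · exact Or.inr ⟨i, (inv_inv _).symm⟩
      · exact Or.inl ⟨i, rfl⟩
    · rw [← lift_mk, mk_toWord, lift_of_apply]
  refine le_antisymm (Nat.sInf_le hletters) (le_csInf ⟨_, hletters⟩ ?_)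
  rintro _ ⟨L, hL, rfl, rfl⟩
  exact norm_list_prod_le hL

theorem dropLast_prefix_reduce_append_singleton {L : List (α × Bool)} (hL : IsReduced L)
    (a : α × Bool) : L.dropLast <+: reduce (L ++ [a]) := by
  rcases List.eq_nil_or_concat L with rfl | ⟨L, b, rfl⟩
  · simp
  rw [List.concat_eq_append] at hL
  rw [List.concat_eq_append, List.dropLast_concat]
  by_cases hba : b.1 = a.1 → b.2 = a.2
  · have hred : IsReduced (L ++ [b] ++ [a]) :=
      hL.append_overlap (by simpa using hba) (List.cons_ne_nil _ _)
    rw [hred.reduce_eq, List.append_assoc]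
    exact List.prefix_append _ _
  · obtain ⟨x, c⟩ := a
    obtain ⟨y, d⟩ := b
    obtain ⟨rfl, rfl⟩ : x = y ∧ d = !c := by simpa [eq_comm, Bool.eq_not] using hba
    have hcancel : Red.Step (L ++ [(x, !c), (x, c)]) L := by
      simpa using Red.Step.not (L₁ := L) (L₂ := []) (x := x) (b := !c)
    rw [List.append_assoc, List.singleton_append, reduce.Step.eq hcancel,
      (hL.infix (List.prefix_append _ _).isInfix).reduce_eq]

theorem take_prefix_reduce_append {L : List (α × Bool)} (hL : IsReduced L)
    (M : List (α × Bool)) : L.take (L.length - M.length) <+: reduce (L ++ M) := by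
  induction M using List.reverseRecOn with
  | nil => simp [hL.reduce_eq]
  | append_singleton M a ih =>
    have hR : IsReduced (reduce (L ++ M)) := .of_reduce_eq reduce.idem
    rw [← List.append_assoc, ← reduce_append_reduce_reduce (L₁ := L ++ M), reduce_singleton]
    refine List.IsPrefix.trans ?_ (dropLast_prefix_reduce_append_singleton hR a)
    rw [List.dropLast_eq_take, List.prefix_take_iff]
    simp only [List.length_append, List.length_singleton] at ih ⊢
    refine ⟨(List.take_prefix_take_left (by omega)).trans ih, ?_⟩
    have := ih.length_le
    simp only [List.length_take] at this ⊢
    omega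

theorem toWord_take_prefix_toWord_mul (x y : FreeGroup α) :
    x.toWord.take (norm x - norm y) <+: (x * y).toWord := by
  rw [toWord_mul]
  exact take_prefix_reduce_append isReduced_toWord y.toWord

theorem toWord_take_eq_of_add_norm_inv_mul_le {x y : FreeGroup α} {p : ℕ}
    (h : p + norm (x⁻¹ * y) ≤ norm x) : x.toWord.take p = y.toWord.take p := by
  have hpre := toWord_take_prefix_toWord_mul x (x⁻¹ * y)
  rw [mul_inv_cancel_left] at hpre
  have hprefix : x.toWord.take p <+: y.toWord :=
    (List.take_prefix_take_left (by omega : p ≤ norm x - norm (x⁻¹ * y))).trans hpre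
  rwa [List.prefix_iff_eq_take, List.length_take_of_le (by unfold norm at h; omega)] at hprefix

theorem norm_inv_mul_le_of_toWord_take_eq {x y : FreeGroup α} {p : ℕ}
    (h : x.toWord.take p = y.toWord.take p) :
    norm (x⁻¹ * y) ≤ (norm x - p) + (norm y - p) := by
  have hsplit (z : FreeGroup α) : mk (z.toWord.take p) * mk (z.toWord.drop p) = z := by
    rw [mul_mk, List.take_append_drop, mk_toWord]
  calc norm (x⁻¹ * y)
      = norm ((mk (x.toWord.take p) * mk (x.toWord.drop p))⁻¹ *
          (mk (y.toWord.take p) * mk (y.toWord.drop p))) := by rw [hsplit x, hsplit y]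
    _ = norm ((mk (x.toWord.drop p))⁻¹ * mk (y.toWord.drop p)) := by rw [h]; group
    _ ≤ (x.toWord.drop p).length + (y.toWord.drop p).length := by
      grw [norm_mul_le, norm_inv_eq, norm_mk_le, norm_mk_le]
    _ = (norm x - p) + (norm y - p) := by simp [norm]

theorem norm_le_add_norm_inv_mul (x y : FreeGroup α) : norm y ≤ norm x + norm (x⁻¹ * y) := by
  simpa using norm_mul_le x (x⁻¹ * y)

theorem norm_inv_mul_comm (x y : FreeGroup α) : norm (x⁻¹ * y) = norm (y⁻¹ * x) := by
  rw [← norm_inv_eq, mul_inv_rev, inv_inv]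

/-- With `k = ‖x‖ / n`, the prefix length `(k - 1) n` is `0` for `k = 0` as well as for `k = 1`,
by truncated subtraction. -/
def annulusSector (n : ℕ) (x : FreeGroup α) : ℕ × List (α × Bool) :=
  (norm x / n, x.toWord.take ((norm x / n - 1) * n))

theorem norm_inv_mul_le_of_annulusSector_eq {n : ℕ} (hn : 0 < n) {x y : FreeGroup α}
    (h : annulusSector n x = annulusSector n y) : norm (x⁻¹ * y) ≤ 4 * n := by
  obtain ⟨hk, htake⟩ := Prod.mk.inj h
  grw [norm_inv_mul_le_of_toWord_take_eq (htake.trans (by rw [hk]))]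
  have bound (z : FreeGroup α) : norm z - (norm z / n - 1) * n ≤ 2 * n := by
    have := Nat.div_add_mod (norm z) n
    have := Nat.mod_lt (norm z) hn
    rw [Nat.sub_one_mul, mul_comm]
    omega
  have := bound y
  rw [← hk] at this
  linarith [bound x]

theorem le_norm_inv_mul_of_annulusSector_ne {n : ℕ} (hn : 0 < n) {x y : FreeGroup α}
    (hne : annulusSector n x ≠ annulusSector n y) (hparity : norm x / n % 2 = norm y / n % 2) :
    n ≤ norm (x⁻¹ * y) := by
  by_contra! hclose
  have level_le {a b : ℕ} (h : a ≤ b + n) : a / n ≤ b / n + 1 := by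
    rw [← Nat.add_div_right _ hn]
    exact Nat.div_le_div_right h
  have hxy : norm x / n ≤ norm y / n + 1 :=
    level_le (by linarith [norm_le_add_norm_inv_mul y x, norm_inv_mul_comm x y])
  have hyx : norm y / n ≤ norm x / n + 1 :=
    level_le (by linarith [norm_le_add_norm_inv_mul x y])
  have hk : norm x / n = norm y / n := by omega
  refine hne (Prod.ext hk ?_)
  rw [annulusSector, annulusSector, ← hk]
  rcases Nat.eq_zero_or_pos (norm x / n) with hk0 | hk0
  · simp [hk0]
  · apply toWord_take_eq_of_add_norm_inv_mul_le
    have := Nat.div_mul_le_self (norm x) n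
    have := Nat.le_mul_of_pos_left n hk0
    rw [Nat.sub_one_mul]
    omega

variable [MetricSpace (FreeGroup α)]

theorem asdimLE_one (hdist : ∀ x y : FreeGroup α, dist x y = norm (x⁻¹ * y)) :
    AsdimLE (FreeGroup α) 1 := by
  refine asdimLE_of_partition fun r hr => ?_
  obtain ⟨n, hrn⟩ := exists_nat_gt r
  have hn : 0 < n := by exact_mod_cast hr.trans hrn
  refine ⟨_, annulusSector n, fun s => ⟨s.1 % 2, by omega⟩, 4 * n, fun x y h => ?_,
    fun x y hne hcolor => ?_⟩
  · rw [hdist]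
    exact_mod_cast norm_inv_mul_le_of_annulusSector_eq hn h
  · rw [hdist]
    exact hrn.le.trans
      (by exact_mod_cast le_norm_inv_mul_of_annulusSector_ne hn hne (Fin.mk.inj hcolor))

theorem not_asdimLE_zero (hdist : ∀ x y : FreeGroup α, dist x y = norm (x⁻¹ * y)) (a : α) :
    ¬ AsdimLE (FreeGroup α) 0 := by
  refine not_asdimLE_zero_of_chain (fun m => of a ^ m) 1 (fun m => ?_) ?_
  · rw [hdist, pow_succ, inv_mul_cancel_left, norm_of, Nat.cast_one]
  · rw [isBounded_iff]
    rintro ⟨C, hC⟩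
    obtain ⟨m, hm⟩ := exists_nat_gt C
    have := hC (mem_range_self 0) (mem_range_self m)
    rw [hdist, pow_zero, inv_one, one_mul, norm_of_pow] at this
    linarith

end FreeGroup

/-- The free group on two generators, with the word metric of a free
basis, has asymptotic dimension exactly `1`. -/
theorem freeGroup_asdim_eq_one [MetricSpace (FreeGroup (Fin 2))]
    (hword : ∀ x y : FreeGroup (Fin 2),
      dist x y = (wordLength (Set.range (FreeGroup.of : Fin 2 → FreeGroup (Fin 2)))
        (x⁻¹ * y) : ℝ)) :
    AsdimLE (FreeGroup (Fin 2)) 1 ∧ ¬ AsdimLE (FreeGroup (Fin 2)) 0 := by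
  have hdist (x y : FreeGroup (Fin 2)) : dist x y = FreeGroup.norm (x⁻¹ * y) := by
    rw [hword, FreeGroup.wordLength_range_of]
  exact ⟨FreeGroup.asdimLE_one hdist, FreeGroup.not_asdimLE_zero hdist 0⟩
end
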